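/- arXiv:2601.21943 — 2 statements merged into one kernel-verified Lean document; each statement's English description precedes it below -/
import Mathlib

section
/- Let ι be a countable type, c : ι → ℝ^d an injective map, and p : ι → ℝ a probability mass function (p ≥ 0 with ∑_z p(z) = 1). Fix t > 0, define the posterior weights w_t(z′ | x) := p(z′) φ_t(x − c(z′)) / ∑_u p(u) φ_t(x − c(u)) and kernel q_{t,z}(z′) := ∫_{ℝ^d} w_t(z′ | x) φ_t(x − c(z)) dx, and suppose S := ∑_z √(p(z)) < ∞. Then for every r ≥ 0, ∑_z p(z) ∑_{z′ : ‖c(z′) − c(z)‖ > r} q_{t,z}(z′) ≤ (S²/2) · exp( −r² / (8t) ). -/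
/-!
For `z ≠ z'` the normalising sum of the posterior weight dominates
`a + b = p z φ_t(x - c z) + p z' φ_t(x - c z')`, so by AM-GM the integrand `a b / (∑ …)` of
`p z q_{t,z}(z')` is at most `√(a b) / 2`. The geometric mean of two Gaussians whose centres are
at distance `ρ` is, by Apollonius' theorem, `exp (-ρ² / 8t)` times the Gaussian centred at the
midpoint, so it has mass `exp (-ρ² / 8t)`. Summing `√(p z) √(p z') exp (-r² / 8t) / 2` over all
pairs gives `S² / 2 · exp (-r² / 8t)`.
-/

open MeasureTheory

/-- Density of the centered Gaussian `N(0, t I_d)` on `ℝ^d`. -/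
noncomputable def gaussDensity (d : ℕ) (t : ℝ) (x : EuclideanSpace ℝ (Fin d)) : ℝ :=
  (2 * Real.pi * t) ^ (-(d : ℝ) / 2) * Real.exp (-‖x‖ ^ 2 / (2 * t))

/-- Posterior weight `w_t(z′ | x) = p(z′) φ_t(x − c(z′)) / ∑_u p(u) φ_t(x − c(u))`. -/
noncomputable def postWeight {ι : Type*} (d : ℕ) (t : ℝ) (p : ι → ℝ)
    (c : ι → EuclideanSpace ℝ (Fin d)) (z' : ι) (x : EuclideanSpace ℝ (Fin d)) : ℝ :=
  p z' * gaussDensity d t (x - c z') / ∑' u, p u * gaussDensity d t (x - c u)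

/-- Kernel `q_{t,z}(z′) = ∫ w_t(z′ | x) φ_t(x − c(z)) dx`. -/
noncomputable def postKernel {ι : Type*} (d : ℕ) (t : ℝ) (p : ι → ℝ)
    (c : ι → EuclideanSpace ℝ (Fin d)) (z z' : ι) : ℝ :=
  ∫ x, postWeight d t p c z' x * gaussDensity d t (x - c z)

lemma mul_div_le_sqrt_mul_div_two {a b D : ℝ} (ha : 0 ≤ a) (hb : 0 ≤ b) (hD : a + b ≤ D) :
    a * b / D ≤ √(a * b) / 2 := by
  have hs := Real.sqrt_nonneg (a * b)
  rcases le_or_gt D 0 with hD0 | hD0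
  · exact (div_nonpos_of_nonneg_of_nonpos (mul_nonneg ha hb) hD0).trans (by positivity)
  rw [div_le_iff₀ hD0]
  have hsq := Real.mul_self_sqrt (mul_nonneg ha hb)
  have hamgm : 2 * √(a * b) ≤ a + b := by nlinarith [four_mul_le_sq_add a b]
  nlinarith

lemma summable_of_summable_sqrt {ι : Type*} {p : ι → ℝ} (hp : ∀ z, 0 ≤ p z)
    (h : Summable fun z => √(p z)) : Summable p := by
  refine h.of_norm_bounded_eventually ?_
  filter_upwards [h.tendsto_cofinite_zero.eventually_le_const zero_lt_one] with z hz
  calc ‖p z‖ = √(p z) * √(p z) := by rw [Real.norm_of_nonneg (hp z), Real.mul_self_sqrt (hp z)]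
    _ ≤ √(p z) := mul_le_of_le_one_left (Real.sqrt_nonneg _) hz

lemma tsum_tsum_le_mul_sq_tsum {ι : Type*} {f : ι → ι → ℝ} {g : ι → ℝ} {C : ℝ}
    (hf : ∀ z z', 0 ≤ f z z') (hfg : ∀ z z', f z z' ≤ C * g z * g z') (hg : Summable g) :
    ∑' z, ∑' z', f z z' ≤ C * (∑' z, g z) ^ 2 := by
  have hinner : ∀ z, ∑' z', f z z' ≤ C * (∑' z', g z') * g z := fun z => by
    have hCg : Summable fun z' => C * g z * g z' := hg.mul_left _
    calc ∑' z', f z z' ≤ ∑' z', C * g z * g z' :=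
          (hCg.of_nonneg_of_le (hf z) (hfg z)).tsum_le_tsum (hfg z) hCg
      _ = C * (∑' z', g z') * g z := by rw [tsum_mul_left]; ring
  have hCg : Summable fun z => C * (∑' z', g z') * g z := hg.mul_left _
  calc ∑' z, ∑' z', f z z' ≤ ∑' z, C * (∑' z', g z') * g z :=
        (hCg.of_nonneg_of_le (fun z => tsum_nonneg (hf z)) hinner).tsum_le_tsum hinner hCg
    _ = C * (∑' z, g z) ^ 2 := by rw [tsum_mul_left]; ring

section Gaussian

variable {d : ℕ} {t : ℝ}

lemma gaussDensity_nonneg (ht : 0 ≤ t) (x : EuclideanSpace ℝ (Fin d)) :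
    0 ≤ gaussDensity d t x := by
  unfold gaussDensity
  positivity

lemma gaussDensity_le (ht : 0 ≤ t) (x : EuclideanSpace ℝ (Fin d)) :
    gaussDensity d t x ≤ (2 * Real.pi * t) ^ (-(d : ℝ) / 2) := by
  unfold gaussDensity
  refine mul_le_of_le_one_right (by positivity) (Real.exp_le_one_iff.mpr ?_)
  exact div_nonpos_of_nonpos_of_nonneg (by nlinarith [sq_nonneg ‖x‖]) (by positivity)

lemma integral_gaussDensity (ht : 0 < t) (m : EuclideanSpace ℝ (Fin d)) :
    ∫ x, gaussDensity d t (x - m) = 1 := by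
  have hexp : ∫ v : EuclideanSpace ℝ (Fin d), Real.exp (-‖v‖ ^ 2 / (2 * t))
      = (2 * Real.pi * t) ^ ((d : ℝ) / 2) := by
    have h := GaussianFourier.integral_rexp_neg_mul_sq_norm (V := EuclideanSpace ℝ (Fin d))
      (show 0 < 1 / (2 * t) by positivity)
    rw [finrank_euclideanSpace_fin, show Real.pi / (1 / (2 * t)) = 2 * Real.pi * t by field_simp]
      at h
    rw [← h]
    congr 1 with v
    ring_nf
  rw [integral_sub_right_eq_self (gaussDensity d t) m]
  simp only [gaussDensity, integral_const_mul]
  rw [hexp, ← Real.rpow_add (by positivity), neg_div, neg_add_cancel, Real.rpow_zero]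

lemma integrable_gaussDensity (ht : 0 < t) (m : EuclideanSpace ℝ (Fin d)) :
    Integrable fun x => gaussDensity d t (x - m) :=
  .of_integral_ne_zero (by rw [integral_gaussDensity ht]; exact one_ne_zero)

lemma sqrt_gaussDensity_mul_gaussDensity (ht : 0 ≤ t) (a b x : EuclideanSpace ℝ (Fin d)) :
    √(gaussDensity d t (x - a) * gaussDensity d t (x - b))
      = Real.exp (-‖a - b‖ ^ 2 / (8 * t)) * gaussDensity d t (x - midpoint ℝ a b) := by
  have hApollonius := EuclideanGeometry.dist_sq_add_dist_sq_eq_two_mul_dist_midpoint_sq_add_half_dist_sq x a b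
  simp only [dist_eq_norm] at hApollonius
  rw [Real.sqrt_eq_iff_mul_self_eq (mul_nonneg (gaussDensity_nonneg ht _) (gaussDensity_nonneg ht _))
    (mul_nonneg (Real.exp_pos _).le (gaussDensity_nonneg ht _))]
  unfold gaussDensity
  set C := (2 * Real.pi * t) ^ (-(d : ℝ) / 2)
  calc C * Real.exp (-‖x - a‖ ^ 2 / (2 * t)) * (C * Real.exp (-‖x - b‖ ^ 2 / (2 * t)))
      = C * C * Real.exp (-‖x - a‖ ^ 2 / (2 * t) + -‖x - b‖ ^ 2 / (2 * t)) := by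
        rw [Real.exp_add]; ring
    _ = C * C * Real.exp ((-‖a - b‖ ^ 2 / (8 * t) + -‖x - midpoint ℝ a b‖ ^ 2 / (2 * t)) +
          (-‖a - b‖ ^ 2 / (8 * t) + -‖x - midpoint ℝ a b‖ ^ 2 / (2 * t))) := by
        congr 2; linear_combination (-1 / (2 * t)) * hApollonius
    _ = _ := by rw [Real.exp_add, Real.exp_add]; ring

lemma integral_sqrt_gaussDensity_mul_gaussDensity (ht : 0 < t) (a b : EuclideanSpace ℝ (Fin d)) :
    ∫ x, √(gaussDensity d t (x - a) * gaussDensity d t (x - b))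
      = Real.exp (-‖a - b‖ ^ 2 / (8 * t)) := by
  simp_rw [sqrt_gaussDensity_mul_gaussDensity ht.le]
  rw [integral_const_mul, integral_gaussDensity ht, mul_one]

end Gaussian

section Posterior

variable {ι : Type*} {d : ℕ} {t : ℝ} {p : ι → ℝ} {c : ι → EuclideanSpace ℝ (Fin d)}

lemma postWeight_nonneg (ht : 0 ≤ t) (hp : ∀ z, 0 ≤ p z) (z' : ι)
    (x : EuclideanSpace ℝ (Fin d)) : 0 ≤ postWeight d t p c z' x :=
  div_nonneg (mul_nonneg (hp z') (gaussDensity_nonneg ht _))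
    (tsum_nonneg fun u => mul_nonneg (hp u) (gaussDensity_nonneg ht _))

lemma postKernel_nonneg (ht : 0 ≤ t) (hp : ∀ z, 0 ≤ p z) (z z' : ι) :
    0 ≤ postKernel d t p c z z' :=
  integral_nonneg fun x => mul_nonneg (postWeight_nonneg ht hp z' x) (gaussDensity_nonneg ht _)

lemma summable_mul_gaussDensity (ht : 0 ≤ t) (hp : ∀ z, 0 ≤ p z) (hps : Summable p)
    (x : EuclideanSpace ℝ (Fin d)) : Summable fun u => p u * gaussDensity d t (x - c u) :=
  (hps.mul_right _).of_nonneg_of_le (fun u => mul_nonneg (hp u) (gaussDensity_nonneg ht _))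
    (fun u => mul_le_mul_of_nonneg_left (gaussDensity_le ht _) (hp u))

lemma mul_postWeight_mul_gaussDensity_le (ht : 0 ≤ t) (hp : ∀ z, 0 ≤ p z) (hps : Summable p)
    {z z' : ι} (hzz' : z ≠ z') (x : EuclideanSpace ℝ (Fin d)) :
    p z * (postWeight d t p c z' x * gaussDensity d t (x - c z))
      ≤ 2⁻¹ * (√(p z) * √(p z')) *
        √(gaussDensity d t (x - c z) * gaussDensity d t (x - c z')) := by
  have hD : p z * gaussDensity d t (x - c z) + p z' * gaussDensity d t (x - c z')
      ≤ ∑' u, p u * gaussDensity d t (x - c u) := by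
    classical
    rw [← Finset.sum_pair (f := fun u => p u * gaussDensity d t (x - c u)) hzz']
    exact (summable_mul_gaussDensity ht hp hps x).sum_le_tsum _
      fun u _ => mul_nonneg (hp u) (gaussDensity_nonneg ht _)
  calc p z * (postWeight d t p c z' x * gaussDensity d t (x - c z))
      = p z * gaussDensity d t (x - c z) * (p z' * gaussDensity d t (x - c z')) /
          ∑' u, p u * gaussDensity d t (x - c u) := by
        rw [postWeight]; ring
    _ ≤ √(p z * gaussDensity d t (x - c z) * (p z' * gaussDensity d t (x - c z'))) / 2 :=
        mul_div_le_sqrt_mul_div_two (mul_nonneg (hp z) (gaussDensity_nonneg ht _))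
          (mul_nonneg (hp z') (gaussDensity_nonneg ht _)) hD
    _ = _ := by
        rw [mul_mul_mul_comm, Real.sqrt_mul (mul_nonneg (hp z) (hp z')), Real.sqrt_mul (hp z)]
        ring

lemma mul_postKernel_le (ht : 0 < t) (hp : ∀ z, 0 ≤ p z) (hps : Summable p) {z z' : ι}
    (hzz' : z ≠ z') :
    p z * postKernel d t p c z z'
      ≤ 2⁻¹ * (√(p z) * √(p z')) * Real.exp (-‖c z - c z'‖ ^ 2 / (8 * t)) := by
  rw [postKernel, ← integral_const_mul, ← integral_sqrt_gaussDensity_mul_gaussDensity ht,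
    ← integral_const_mul]
  refine integral_mono_of_nonneg (.of_forall fun x => ?_) ?_
    (.of_forall (mul_postWeight_mul_gaussDensity_le ht.le hp hps hzz'))
  · exact mul_nonneg (hp z) (mul_nonneg (postWeight_nonneg ht.le hp z' x)
      (gaussDensity_nonneg ht.le _))
  · simp_rw [sqrt_gaussDensity_mul_gaussDensity ht.le]
    exact ((integrable_gaussDensity ht _).const_mul _).const_mul _

lemma mul_postKernel_tail_le (ht : 0 < t) (hp : ∀ z, 0 ≤ p z) (hps : Summable p) {r : ℝ}
    (hr : 0 ≤ r) (z z' : ι) :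
    p z * (if r < ‖c z' - c z‖ then postKernel d t p c z z' else 0)
      ≤ 2⁻¹ * Real.exp (-r ^ 2 / (8 * t)) * √(p z) * √(p z') := by
  split_ifs with hfar
  · have hzz' : z ≠ z' := by
      rintro rfl
      simp only [sub_self, norm_zero] at hfar
      linarith
    have hexp : Real.exp (-‖c z - c z'‖ ^ 2 / (8 * t)) ≤ Real.exp (-r ^ 2 / (8 * t)) := by
      rw [norm_sub_rev] at hfar
      gcongr
    calc p z * postKernel d t p c z z'
        ≤ 2⁻¹ * (√(p z) * √(p z')) * Real.exp (-‖c z - c z'‖ ^ 2 / (8 * t)) :=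
          mul_postKernel_le ht hp hps hzz'
      _ ≤ 2⁻¹ * (√(p z) * √(p z')) * Real.exp (-r ^ 2 / (8 * t)) := by gcongr
      _ = _ := by ring
  · rw [mul_zero]
    positivity

end Posterior

theorem averaged_postKernel_tail_bound_general
    {ι : Type*} {d : ℕ} (c : ι → EuclideanSpace ℝ (Fin d))
    (p : ι → ℝ) (hp : ∀ z, 0 ≤ p z)
    (t : ℝ) (ht : 0 < t)
    (S : ℝ) (hSsum : Summable (fun z => Real.sqrt (p z)))
    (hS : S = ∑' z, Real.sqrt (p z))
    (r : ℝ) (hr : 0 ≤ r) :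
    ∑' z, p z * ∑' z', (if r < ‖c z' - c z‖ then postKernel d t p c z z' else 0)
      ≤ S ^ 2 / 2 * Real.exp (-r ^ 2 / (8 * t)) := by
  have hps : Summable p := summable_of_summable_sqrt hp hSsum
  have hnonneg : ∀ z z', 0 ≤ p z * (if r < ‖c z' - c z‖ then postKernel d t p c z z' else 0) :=
    fun z z' => mul_nonneg (hp z) (ite_nonneg (postKernel_nonneg ht.le hp z z') le_rfl)
  simp_rw [← tsum_mul_left]
  calc _ ≤ 2⁻¹ * Real.exp (-r ^ 2 / (8 * t)) * S ^ 2 :=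
        hS ▸ tsum_tsum_le_mul_sq_tsum hnonneg (mul_postKernel_tail_le ht hp hps hr) hSsum
    _ = S ^ 2 / 2 * Real.exp (-r ^ 2 / (8 * t)) := by ring

/-- Averaged tail bound: with `S = ∑_z √(p(z)) < ∞`, for every `r ≥ 0`,
`∑_z p(z) ∑_{z′ : ‖c(z′) − c(z)‖ > r} q_{t,z}(z′) ≤ (S²/2) exp(−r²/(8t))`. -/
theorem averaged_postKernel_tail_bound
    {ι : Type*} [Countable ι] {d : ℕ} (c : ι → EuclideanSpace ℝ (Fin d))
    (hc : Function.Injective c) (p : ι → ℝ) (hp : ∀ z, 0 ≤ p z) (hp1 : ∑' z, p z = 1)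
    (t : ℝ) (ht : 0 < t)
    (S : ℝ) (hSsum : Summable (fun z => Real.sqrt (p z)))
    (hS : S = ∑' z, Real.sqrt (p z))
    (r : ℝ) (hr : 0 ≤ r) :
    ∑' z, p z * ∑' z', (if r < ‖c z' - c z‖ then postKernel d t p c z z' else 0)
      ≤ S ^ 2 / 2 * Real.exp (-r ^ 2 / (8 * t)) :=
  averaged_postKernel_tail_bound_general c p hp t ht S hSsum hS r hr
end

section
/- Let ι be a finite nonempty type, z : ι → ℝ^d a family of points, p : ι → ℝ with p(i) > 0 for all i and ∑_i p(i) = 1, and t > 0. Define w_i(x) := p(i) φ_t(x − z(i)) / ∑_j p(j) φ_t(x − z(j)), the posterior mean m(x) := ∑_i w_i(x) z(i), the posterior covariance matrix Σ(x) with entries Σ(x)_{ab} = ∑_i w_i(x) (z(i) − m(x))_a (z(i) − m(x))_b, and the kernel q_{t,i₀}(j) := ∫_{ℝ^d} w_j(x) φ_t(x − z(i₀)) dx. Then for every index i₀, ∫_{ℝ^d} tr( Σ(x)² ) φ_t(x − z(i₀)) dx ≤ ∑_j q_{t,i₀}(j) · ‖z(j) − z(i₀)‖⁴. -/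
/-! Pointwise in `x`, with `u i = z i - m x` we have `Σ = ∑ w_i u_i u_iᵀ`, so
`tr Σ² = ∑ w_i w_j ⟪u_i, u_j⟫² ≤ (∑ w_i ‖u_i‖²)²` by Cauchy–Schwarz. The mean minimises the
weighted second moment, so this is at most `(∑ w_i ‖z i - z i₀‖²)² ≤ ∑ w_i ‖z i - z i₀‖⁴`
(Jensen). Integrating against `φ_t(· - z i₀)` turns the weights `w_j` into `q j`. -/

open MeasureTheory

section Gaussian

variable {d : ℕ} {t : ℝ}

lemma gaussDensity_pos (ht : 0 < t) (x : EuclideanSpace ℝ (Fin d)) : 0 < gaussDensity d t x := by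
  unfold gaussDensity
  have : 0 < 2 * Real.pi * t := by positivity
  positivity

@[fun_prop]
lemma continuous_gaussDensity : Continuous (gaussDensity d t) := by
  unfold gaussDensity
  fun_prop

lemma integrable_gaussDensity_s15 (ht : 0 < t) : Integrable (gaussDensity d t) := by
  have h := (GaussianFourier.integrable_cexp_neg_mul_sq_norm_add
    (V := EuclideanSpace ℝ (Fin d)) (b := 1 / (2 * t)) (by simp; positivity) 0 0).norm
  simp only [zero_mul, add_zero, Complex.norm_exp] at h
  refine (h.const_mul ((2 * Real.pi * t) ^ (-(d : ℝ) / 2))).congr (ae_of_all _ fun x => ?_)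
  simp only [gaussDensity]
  congr 2
  simp [← Complex.ofReal_pow]
  ring

end Gaussian

section WeightedMoments

variable {ι : Type*} [Fintype ι] {W : ι → ℝ}

lemma sq_sum_mul_le_sum_mul_sq (hW : ∀ i, 0 ≤ W i) (hW1 : ∑ i, W i = 1) (a : ι → ℝ) :
    (∑ i, W i * a i) ^ 2 ≤ ∑ i, W i * a i ^ 2 :=
  (even_two.convexOn_pow (𝕜 := ℝ)).map_sum_le (fun i _ => hW i) hW1 (fun _ _ => Set.mem_univ _)

variable {E : Type*} [NormedAddCommGroup E] [InnerProductSpace ℝ E]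

lemma sum_mul_norm_sub_sq_eq (hW1 : ∑ i, W i = 1) (z : ι → E) (c : E) :
    ∑ i, W i * ‖z i - c‖ ^ 2
      = ∑ i, W i * ‖z i - ∑ j, W j • z j‖ ^ 2 + ‖∑ j, W j • z j - c‖ ^ 2 := by
  set m := ∑ j, W j • z j
  have hcentred : ∑ i, W i • (z i - m) = 0 := by
    simp [smul_sub, Finset.sum_sub_distrib, ← Finset.sum_smul, hW1, m]
  have hcross : ∑ i, W i * (2 * inner ℝ (z i - m) (m - c)) = 0 := by
    simp_rw [mul_left_comm (W _), ← Finset.mul_sum, ← real_inner_smul_left, ← sum_inner,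
      hcentred, inner_zero_left, mul_zero]
  calc ∑ i, W i * ‖z i - c‖ ^ 2
      = ∑ i, W i * (‖z i - m‖ ^ 2 + 2 * inner ℝ (z i - m) (m - c) + ‖m - c‖ ^ 2) := by
        simp_rw [← norm_add_sq_real, sub_add_sub_cancel]
    _ = ∑ i, W i * ‖z i - m‖ ^ 2 + ‖m - c‖ ^ 2 := by
        simp_rw [mul_add, Finset.sum_add_distrib, hcross, ← Finset.sum_mul, hW1]
        ring

lemma sum_mul_norm_sub_mean_sq_le (hW1 : ∑ i, W i = 1) (z : ι → E) (c : E) :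
    ∑ i, W i * ‖z i - ∑ j, W j • z j‖ ^ 2 ≤ ∑ i, W i * ‖z i - c‖ ^ 2 := by
  rw [sum_mul_norm_sub_sq_eq hW1 z c]
  exact le_add_of_nonneg_right (sq_nonneg _)

end WeightedMoments

section Covariance

variable {ι n : Type*} [Fintype ι] [Fintype n] {W : ι → ℝ}

def weightedOuterSum (W : ι → ℝ) (u : ι → EuclideanSpace ℝ n) : Matrix n n ℝ :=
  ∑ i, W i • Matrix.vecMulVec (u i) (u i)

lemma trace_weightedOuterSum_mul_self (u : ι → EuclideanSpace ℝ n) :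
    (weightedOuterSum W u * weightedOuterSum W u).trace
      = ∑ i, ∑ j, W i * W j * inner ℝ (u i) (u j) ^ 2 := by
  simp only [weightedOuterSum, Finset.sum_mul, Finset.mul_sum, Matrix.smul_mul, Matrix.mul_smul,
    Matrix.vecMulVec_mul_vecMulVec, Matrix.trace_sum, Matrix.trace_smul, Matrix.trace_vecMulVec,
    EuclideanSpace.inner_eq_star_dotProduct, dotProduct_smul, star_trivial, smul_eq_mul]
  refine Finset.sum_congr rfl fun i _ => Finset.sum_congr rfl fun j _ => ?_
  rw [dotProduct_comm (u j).ofLp]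
  ring

lemma trace_weightedOuterSum_mul_self_le (hW : ∀ i, 0 ≤ W i) (u : ι → EuclideanSpace ℝ n) :
    (weightedOuterSum W u * weightedOuterSum W u).trace ≤ (∑ i, W i * ‖u i‖ ^ 2) ^ 2 := by
  rw [trace_weightedOuterSum_mul_self, sq, Finset.sum_mul_sum]
  refine Finset.sum_le_sum fun i _ => Finset.sum_le_sum fun j _ => ?_
  calc W i * W j * inner ℝ (u i) (u j) ^ 2 ≤ W i * W j * (‖u i‖ * ‖u j‖) ^ 2 := by
        refine mul_le_mul_of_nonneg_left ?_ (mul_nonneg (hW i) (hW j))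
        exact sq_le_sq' (abs_le.mp (abs_real_inner_le_norm (u i) (u j))).1
          (real_inner_le_norm _ _)
    _ = W i * ‖u i‖ ^ 2 * (W j * ‖u j‖ ^ 2) := by ring

lemma trace_weightedOuterSum_mul_self_nonneg (hW : ∀ i, 0 ≤ W i) (u : ι → EuclideanSpace ℝ n) :
    0 ≤ (weightedOuterSum W u * weightedOuterSum W u).trace := by
  rw [trace_weightedOuterSum_mul_self]
  exact Finset.sum_nonneg fun i _ => Finset.sum_nonneg fun j _ =>
    mul_nonneg (mul_nonneg (hW i) (hW j)) (sq_nonneg _)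

def weightedCov (W : ι → ℝ) (z : ι → EuclideanSpace ℝ n) : Matrix n n ℝ :=
  weightedOuterSum W fun i => z i - ∑ j, W j • z j

lemma trace_weightedCov_mul_self_le (hW : ∀ i, 0 ≤ W i) (hW1 : ∑ i, W i = 1)
    (z : ι → EuclideanSpace ℝ n) (c : EuclideanSpace ℝ n) :
    (weightedCov W z * weightedCov W z).trace ≤ ∑ i, W i * ‖z i - c‖ ^ 4 :=
  calc _ ≤ (∑ i, W i * ‖z i - ∑ j, W j • z j‖ ^ 2) ^ 2 :=
        trace_weightedOuterSum_mul_self_le hW _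
    _ ≤ (∑ i, W i * ‖z i - c‖ ^ 2) ^ 2 := by
        refine pow_le_pow_left₀ ?_ (sum_mul_norm_sub_mean_sq_le hW1 z c) 2
        exact Finset.sum_nonneg fun i _ => mul_nonneg (hW i) (sq_nonneg _)
    _ ≤ ∑ i, W i * (‖z i - c‖ ^ 2) ^ 2 := sq_sum_mul_le_sum_mul_sq hW hW1 _
    _ = ∑ i, W i * ‖z i - c‖ ^ 4 := by simp_rw [← pow_mul]

end Covariance

section Posterior

variable {ι : Type*} [Fintype ι] {d : ℕ} {z : ι → EuclideanSpace ℝ (Fin d)} {p : ι → ℝ} {t : ℝ}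
  {w : ι → EuclideanSpace ℝ (Fin d) → ℝ}

lemma sum_mul_gaussDensity_pos [Nonempty ι] (hp : ∀ i, 0 < p i) (ht : 0 < t)
    (x : EuclideanSpace ℝ (Fin d)) : 0 < ∑ j, p j * gaussDensity d t (x - z j) :=
  Finset.sum_pos (fun j _ => mul_pos (hp j) (gaussDensity_pos ht _)) Finset.univ_nonempty

lemma posterior_nonneg (hp : ∀ i, 0 < p i) (ht : 0 < t)
    (hw : ∀ i x, w i x = p i * gaussDensity d t (x - z i) / ∑ j, p j * gaussDensity d t (x - z j))
    (i : ι) (x : EuclideanSpace ℝ (Fin d)) : 0 ≤ w i x := by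
  rw [hw]
  exact div_nonneg (mul_pos (hp i) (gaussDensity_pos ht _)).le
    (Finset.sum_nonneg fun j _ => (mul_pos (hp j) (gaussDensity_pos ht _)).le)

lemma posterior_sum_eq_one [Nonempty ι] (hp : ∀ i, 0 < p i) (ht : 0 < t)
    (hw : ∀ i x, w i x = p i * gaussDensity d t (x - z i) / ∑ j, p j * gaussDensity d t (x - z j))
    (x : EuclideanSpace ℝ (Fin d)) : ∑ i, w i x = 1 := by
  simp_rw [hw, ← Finset.sum_div]
  exact div_self (sum_mul_gaussDensity_pos hp ht x).ne'

lemma continuous_posterior [Nonempty ι] (hp : ∀ i, 0 < p i) (ht : 0 < t)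
    (hw : ∀ i x, w i x = p i * gaussDensity d t (x - z i) / ∑ j, p j * gaussDensity d t (x - z j))
    (i : ι) : Continuous (w i) := by
  rw [funext (hw i)]
  exact Continuous.div (by fun_prop) (by fun_prop) fun x => (sum_mul_gaussDensity_pos hp ht x).ne'

lemma integrable_posterior_mul_gaussDensity (hp : ∀ i, 0 < p i) (ht : 0 < t)
    (hw : ∀ i x, w i x = p i * gaussDensity d t (x - z i) / ∑ j, p j * gaussDensity d t (x - z j))
    (i : ι) (c : EuclideanSpace ℝ (Fin d)) :
    Integrable fun x => w i x * gaussDensity d t (x - c) := by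
  have : Nonempty ι := ⟨i⟩
  refine ((integrable_gaussDensity_s15 ht).comp_sub_right c).bdd_mul (c := 1)
    (continuous_posterior hp ht hw i).aestronglyMeasurable (ae_of_all _ fun x => ?_)
  rw [Real.norm_of_nonneg (posterior_nonneg hp ht hw i x), ← posterior_sum_eq_one hp ht hw x]
  exact Finset.single_le_sum (fun j _ => posterior_nonneg hp ht hw j x) (Finset.mem_univ i)

end Posterior

theorem trace_cov_sq_le_kernel_fourth_moment_general
    {ι : Type*} [Fintype ι] {d : ℕ}
    (z : ι → EuclideanSpace ℝ (Fin d)) (p : ι → ℝ)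
    (hp : ∀ i, 0 < p i)
    (t : ℝ) (ht : 0 < t)
    (w : ι → EuclideanSpace ℝ (Fin d) → ℝ)
    (hw : ∀ i x, w i x =
      p i * gaussDensity d t (x - z i) / ∑ j, p j * gaussDensity d t (x - z j))
    (m : EuclideanSpace ℝ (Fin d) → EuclideanSpace ℝ (Fin d))
    (hm : ∀ x, m x = ∑ i, w i x • z i)
    (Sig : EuclideanSpace ℝ (Fin d) → Matrix (Fin d) (Fin d) ℝ)
    (hSig : ∀ x a b, Sig x a b = ∑ i, w i x * (z i - m x) a * (z i - m x) b)
    (i₀ : ι) (q : ι → ℝ)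
    (hq : ∀ j, q j = ∫ x, w j x * gaussDensity d t (x - z i₀)) :
    ∫ x, Matrix.trace (Sig x * Sig x) * gaussDensity d t (x - z i₀)
      ≤ ∑ j, q j * ‖z j - z i₀‖ ^ 4 := by
  have : Nonempty ι := ⟨i₀⟩
  have hw0 := posterior_nonneg hp ht hw
  have hw1 := posterior_sum_eq_one hp ht hw
  have hφ := fun x => (gaussDensity_pos ht (x - z i₀)).le
  have hSig_eq : ∀ x, Sig x = weightedCov (w · x) z := by
    intro x
    ext a b
    simp [hSig, hm, weightedCov, weightedOuterSum, Matrix.sum_apply, Matrix.vecMulVec_apply,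
      mul_assoc]
  have hint := fun j => (integrable_posterior_mul_gaussDensity hp ht hw j (z i₀)).const_mul
    (‖z j - z i₀‖ ^ 4)
  calc ∫ x, Matrix.trace (Sig x * Sig x) * gaussDensity d t (x - z i₀)
      ≤ ∫ x, ∑ j, ‖z j - z i₀‖ ^ 4 * (w j x * gaussDensity d t (x - z i₀)) := by
        refine integral_mono_of_nonneg (ae_of_all _ fun x => ?_)
          (integrable_finsetSum _ fun j _ => hint j) (ae_of_all _ fun x => ?_)
        · simp only [Pi.zero_apply, hSig_eq]
          exact mul_nonneg (trace_weightedOuterSum_mul_self_nonneg (hw0 · x) _) (hφ x)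
        · simp_rw [mul_left_comm _ (w _ x), ← mul_assoc, ← Finset.sum_mul, hSig_eq]
          exact mul_le_mul_of_nonneg_right
            (trace_weightedCov_mul_self_le (hw0 · x) (hw1 x) z (z i₀)) (hφ x)
    _ = ∑ j, q j * ‖z j - z i₀‖ ^ 4 := by
        rw [integral_finsetSum _ fun j _ => hint j]
        simp_rw [integral_const_mul, hq, mul_comm]

/-- For a finite mixture, the conditional expected squared-trace of the
posterior covariance is bounded by the kernel-averaged fourth moment:
`∫ tr(Σ(x)²) φ_t(x − z(i₀)) dx ≤ ∑_j q_{t,i₀}(j) ‖z(j) − z(i₀)‖⁴`. -/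
theorem trace_cov_sq_le_kernel_fourth_moment
    {ι : Type*} [Fintype ι] [Nonempty ι] {d : ℕ}
    (z : ι → EuclideanSpace ℝ (Fin d)) (p : ι → ℝ)
    (hp : ∀ i, 0 < p i) (hp1 : ∑ i, p i = 1)
    (t : ℝ) (ht : 0 < t)
    (w : ι → EuclideanSpace ℝ (Fin d) → ℝ)
    (hw : ∀ i x, w i x =
      p i * gaussDensity d t (x - z i) / ∑ j, p j * gaussDensity d t (x - z j))
    (m : EuclideanSpace ℝ (Fin d) → EuclideanSpace ℝ (Fin d))
    (hm : ∀ x, m x = ∑ i, w i x • z i)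
    (Sig : EuclideanSpace ℝ (Fin d) → Matrix (Fin d) (Fin d) ℝ)
    (hSig : ∀ x a b, Sig x a b = ∑ i, w i x * (z i - m x) a * (z i - m x) b)
    (i₀ : ι) (q : ι → ℝ)
    (hq : ∀ j, q j = ∫ x, w j x * gaussDensity d t (x - z i₀)) :
    ∫ x, Matrix.trace (Sig x * Sig x) * gaussDensity d t (x - z i₀)
      ≤ ∑ j, q j * ‖z j - z i₀‖ ^ 4 :=
  trace_cov_sq_le_kernel_fourth_moment_general z p hp t ht w hw m hm Sig hSig i₀ q hq
end
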